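/- arXiv:2509.16265 — 4 statements merged into one kernel-verified Lean document; each statement's English description precedes it below -/
import Mathlib

section
/- Let n ≥ 1. Then: (i) Π S_X e_∅ = (√n/2) u; (ii) Π S_X u = (√n/2) e_∅; and (iii) for every vector c = Σᵢ cᵢ e_{i} in the span of the singleton states with Σᵢ cᵢ = 0, one has Π S_X c = 0. Hence, restricted to the low-energy subspace 𝓛, the operator S_X acts as (√n/2)·σˣ on the two-dimensional same-sign subspace span{u, e_∅} and as 0 on the orthogonal complement of u inside the singleton span. -/
open scoped InnerProductSpace
noncomputable section

/-- The Hilbert space of an `n`-vertex clique: orthonormal basis indexed by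
subsets of `Fin n` (Boolean strings of length `n`). -/
abbrev CliqueSpace (n : ℕ) := EuclideanSpace ℂ (Finset (Fin n))

/-- The computational basis vector `e_S` for a subset `S`. -/
def basisVec {n : ℕ} (S : Finset (Fin n)) : CliqueSpace n :=
  EuclideanSpace.single S 1

/-- The bit-flip operator `σᵢˣ`, permuting basis vectors by flipping the `i`-th bit. -/
def sigmaX {n : ℕ} (i : Fin n) : CliqueSpace n →ₗ[ℂ] CliqueSpace n where
  toFun ψ := WithLp.toLp 2 (fun S => ψ (symmDiff S {i}))
  map_add' _ _ := rfl
  map_smul' _ _ := rfl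

/-- The total transverse-field operator `S_X = (1/2) Σᵢ σᵢˣ`. -/
def SX (n : ℕ) : CliqueSpace n →ₗ[ℂ] CliqueSpace n :=
  (1/2 : ℂ) • ∑ i : Fin n, sigmaX i

/-- The low-energy subspace `𝓛`, spanned by the empty-set state and the singleton states. -/
def lowSub (n : ℕ) : Submodule ℂ (CliqueSpace n) :=
  Submodule.span ℂ ({basisVec ∅} ∪ Set.range fun i : Fin n => basisVec {i})

/-- The orthogonal projection `Π` onto the low-energy subspace, as an endomorphism. -/
def projLow (n : ℕ) : CliqueSpace n →ₗ[ℂ] CliqueSpace n :=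
  (lowSub n).subtype ∘ₗ ((lowSub n).orthogonalProjection).toLinearMap

/-- The uniform superposition `u = (1/√n) Σᵢ e_{i}` of the singleton states. -/
def uniformState (n : ℕ) : CliqueSpace n :=
  ((Real.sqrt n : ℂ))⁻¹ • ∑ i : Fin n, basisVec {i}

lemma sigmaX_basis {n : ℕ} (i : Fin n) (S : Finset (Fin n)) :
    sigmaX i (basisVec S) = basisVec (symmDiff S {i}) := by
  ext T
  show basisVec S (symmDiff T {i}) = basisVec (symmDiff S {i}) T
  simp only [basisVec, EuclideanSpace.single_apply]
  congr 1
  simp only [eq_iff_iff]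
  constructor
  · intro h; rw [← h]; simp [symmDiff_symmDiff_cancel_right]
  · intro h; rw [h]; simp [symmDiff_symmDiff_cancel_right]

lemma proj_mem {n : ℕ} {x : CliqueSpace n} (h : x ∈ lowSub n) : projLow n x = x := by
  exact congrArg Subtype.val (Submodule.orthogonalProjectionOnto_mem_subspace_eq_self (K := lowSub n) ⟨x, h⟩)

lemma mem_low_empty {n : ℕ} : basisVec (∅ : Finset (Fin n)) ∈ lowSub n :=
  Submodule.subset_span (Or.inl rfl)

lemma mem_low_single {n : ℕ} (i : Fin n) : basisVec ({i} : Finset (Fin n)) ∈ lowSub n :=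
  Submodule.subset_span (Or.inr ⟨i, rfl⟩)

lemma inner_basis {n : ℕ} (S T : Finset (Fin n)) :
    ⟪basisVec S, basisVec T⟫_ℂ = if S = T then 1 else 0 := by
  simp [basisVec, EuclideanSpace.inner_single_left, EuclideanSpace.single_apply, eq_comm]

lemma proj_orth {n : ℕ} {S : Finset (Fin n)} (h0 : S ≠ ∅) (h1 : ∀ i, S ≠ {i}) :
    projLow n (basisVec S) = 0 := by
  have hmem : basisVec S ∈ (lowSub n)ᗮ := by
    rw [Submodule.mem_orthogonal]
    intro u hu
    induction hu using Submodule.span_induction with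
    | mem x hx =>
      rcases hx with hx | ⟨i, rfl⟩
      · rw [Set.mem_singleton_iff] at hx; subst hx
        rw [inner_basis, if_neg (Ne.symm h0)]
      · rw [inner_basis, if_neg (fun h => h1 i h.symm)]
    | zero => simp
    | add x y _ _ hx hy => rw [inner_add_left, hx, hy]; ring
    | smul a x _ hx => rw [inner_smul_left, hx]; ring
  simp [projLow, Submodule.orthogonalProjectionOnto_apply_of_mem_orthogonal hmem]

lemma SX_basis {n : ℕ} (S : Finset (Fin n)) :
    SX n (basisVec S) = (1/2 : ℂ) • ∑ i : Fin n, basisVec (symmDiff S {i}) := by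
  simp [SX, LinearMap.sum_apply, sigmaX_basis]

lemma symmDiff_empty_single {n : ℕ} (i : Fin n) :
    symmDiff (∅ : Finset (Fin n)) {i} = {i} := by
  simp

lemma projSX_single {n : ℕ} (i : Fin n) :
    projLow n (SX n (basisVec ({i} : Finset (Fin n)))) = (1/2 : ℂ) • basisVec ∅ := by
  rw [SX_basis, map_smul, map_sum]
  congr 1
  rw [Finset.sum_eq_single i]
  · have : symmDiff ({i} : Finset (Fin n)) {i} = ∅ := by simp
    rw [this, proj_mem mem_low_empty]
  · intro j _ hj
    apply proj_orth
    · intro h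
      have : i ∈ symmDiff ({i} : Finset (Fin n)) {j} := by
        simp [Finset.mem_symmDiff, (hj.symm : i ≠ j)]
      rw [h] at this; simp at this
    · intro k h
      have hi : i ∈ symmDiff ({i} : Finset (Fin n)) {j} := by
        simp [Finset.mem_symmDiff, (hj.symm : i ≠ j)]
      have hjj : j ∈ symmDiff ({i} : Finset (Fin n)) {j} := by
        simp [Finset.mem_symmDiff, hj]
      rw [h] at hi hjj
      simp at hi hjj
      exact hj (hjj.trans hi.symm)
  · intro h; simp at h

/-- (i) `Π S_X e_∅ = (√n/2) u`; (ii) `Π S_X u = (√n/2) e_∅`; (iii) for every vector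
`c = Σᵢ cᵢ e_{i}` in the singleton span with `Σᵢ cᵢ = 0`, `Π S_X c = 0`. Hence on the
low-energy subspace `S_X` acts as `(√n/2)·σˣ` on `span{u, e_∅}` and as `0` on the
orthogonal complement of `u` inside the singleton span. -/
theorem stmt4 (n : ℕ) (hn : 1 ≤ n) :
    projLow n (SX n (basisVec ∅)) = ((Real.sqrt n / 2 : ℝ) : ℂ) • uniformState n ∧
    projLow n (SX n (uniformState n)) = ((Real.sqrt n / 2 : ℝ) : ℂ) • basisVec ∅ ∧
    ∀ c : Fin n → ℂ, (∑ i, c i = 0) →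
      projLow n (SX n (∑ i, c i • basisVec {i})) = 0 := by
  have hs : Real.sqrt n ≠ 0 := by
    positivity
  have hmul : Real.sqrt n * Real.sqrt n = n := Real.mul_self_sqrt (by positivity)
  refine ⟨?_, ?_, ?_⟩
  · rw [SX_basis, map_smul, map_sum]
    have h1 : ∀ i : Fin n, projLow n (basisVec (symmDiff (∅ : Finset (Fin n)) {i}))
        = basisVec {i} := by
      intro i; rw [symmDiff_empty_single, proj_mem (mem_low_single i)]
    rw [Finset.sum_congr rfl (fun i _ => h1 i)]
    rw [uniformState, smul_smul]
    congr 1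
    have : ((Real.sqrt n : ℂ)) ≠ 0 := by exact_mod_cast hs
    field_simp
    push_cast; ring
  · rw [uniformState, map_smul, map_smul, map_sum, map_sum]
    rw [Finset.sum_congr rfl (fun i _ => projSX_single i)]
    rw [Finset.sum_const, Finset.card_univ, Fintype.card_fin, ← Nat.cast_smul_eq_nsmul ℂ,
      smul_smul, smul_smul]
    congr 1
    have h2 : ((Real.sqrt n : ℂ)) * (Real.sqrt n : ℂ) = (n : ℂ) := by
      exact_mod_cast congrArg (Complex.ofReal ·) hmul
    have : ((Real.sqrt n : ℂ)) ≠ 0 := by exact_mod_cast hs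
    rw [← h2]
    push_cast
    field_simp
  · intro c hc
    rw [map_sum, map_sum]
    simp only [map_smul]
    rw [Finset.sum_congr rfl (fun i _ => by rw [projSX_single i])]
    rw [← Finset.sum_smul, hc, zero_smul]
end
end

section
/- Let m be a natural number, n ≥ 0 and x real. Set s = √(1 + n·x²), γ = (√n·x)/(1 + s), and for 0 ≤ k ≤ m set e_k = -((m/2)(1 + s)) + k·s (the k-th bare energy level for unit weights). Then the energy-weighted sum of squared overlaps vanishes: Σ_{k=0}^{m} C(m,k) · e_k · (γ²)^{m-k} / (1 + γ²)^{m} = 0, where C(m,k) is the binomial coefficient. -/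
open Finset in
lemma aux_binom_sum (n : ℕ) (y : ℝ) :
    ∑ k ∈ range (n+1), (n.choose k : ℝ) * y^(n-k) = (1+y)^n := by
  rw [add_pow]
  exact Finset.sum_congr rfl (fun k _ => by ring)

open Finset in
lemma aux_binom_sum' (n : ℕ) (y : ℝ) :
    ∑ k ∈ range (n+1), (k:ℝ) * (n.choose k : ℝ) * y^(n-k) = n * (1+y)^(n-1) := by
  cases n with
  | zero => simp
  | succ m =>
    rw [Finset.sum_range_succ']
    have h : ∀ i ∈ range (m+1), ((i+1:ℕ):ℝ) * ((m+1).choose (i+1) : ℝ) * y^(m+1-(i+1))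
        = ((m:ℝ)+1) * ((m.choose i : ℝ) * y^(m-i)) := by
      intro i _
      have hc : ((m+1).choose (i+1) * (i+1) : ℕ) = (m+1) * m.choose i := by
        rw [← Nat.add_one_mul_choose_eq]
      have hc' : (((m+1).choose (i+1) : ℝ)) * ((i:ℝ)+1) = ((m:ℝ)+1) * (m.choose i : ℝ) := by
        exact_mod_cast congrArg (Nat.cast : ℕ → ℝ) hc
      have hp : m + 1 - (i + 1) = m - i := by omega
      rw [hp]
      push_cast
      linear_combination y^(m-i) * hc'
    rw [Finset.sum_congr rfl h]
    rw [← Finset.mul_sum, aux_binom_sum]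
    simp

/-- With `s = √(1 + n·x²)`, `γ = (√n·x)/(1 + s)` and bare energy levels
`e_k = -((m/2)(1+s)) + k·s`, the energy-weighted sum of squared overlaps vanishes:
`Σ_{k=0}^{m} C(m,k) · e_k · (γ²)^{m-k} / (1+γ²)^m = 0`. -/
theorem stmt10 (m : ℕ) (n x : ℝ) (hn : 0 ≤ n) :
    let s := Real.sqrt (1 + n * x^2)
    let γ := Real.sqrt n * x / (1 + s)
    let e : ℕ → ℝ := fun k => -((m : ℝ) / 2 * (1 + s)) + (k : ℝ) * s
    ∑ k ∈ Finset.range (m + 1),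
      (m.choose k : ℝ) * e k * (γ^2)^(m - k) / (1 + γ^2)^m = 0 := by
  intro s γ e
  have hnx : (0:ℝ) ≤ 1 + n * x^2 := by positivity
  have hs1 : 1 ≤ s := by
    rw [show (1:ℝ) = Real.sqrt 1 by simp]
    exact Real.sqrt_le_sqrt (by nlinarith)
  have hs2 : s^2 = 1 + n * x^2 := Real.sq_sqrt hnx
  have hs0 : (1:ℝ) + s ≠ 0 := by positivity
  have hγ2 : γ^2 = (s - 1) / (1 + s) := by
    show (Real.sqrt n * x / (1 + s))^2 = (s - 1) / (1 + s)
    rw [div_pow, mul_pow, Real.sq_sqrt hn]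
    rw [div_eq_div_iff (by positivity) hs0]
    nlinarith [hs2]
  have hkey : (1 + s) * (1 + γ^2) = 2 * s := by
    rw [hγ2]
    field_simp
    ring
  -- rewrite sum as numerator / (1+γ²)^m
  rw [← Finset.sum_div]
  have hnum : ∑ k ∈ Finset.range (m + 1),
      (m.choose k : ℝ) * e k * (γ^2)^(m - k) = 0 := by
    have he : ∀ k ∈ Finset.range (m+1),
        (m.choose k : ℝ) * e k * (γ^2)^(m - k)
          = -((m:ℝ)/2 * (1+s)) * ((m.choose k : ℝ) * (γ^2)^(m-k))
            + s * ((k:ℝ) * (m.choose k : ℝ) * (γ^2)^(m-k)) := by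
      intro k _
      show (m.choose k : ℝ) * (-((m : ℝ) / 2 * (1 + s)) + (k : ℝ) * s) * (γ^2)^(m - k) = _
      ring
    rw [Finset.sum_congr rfl he, Finset.sum_add_distrib, ← Finset.mul_sum, ← Finset.mul_sum,
      aux_binom_sum, aux_binom_sum']
    cases m with
    | zero => simp
    | succ m' =>
      have : (1 + γ^2)^(m'+1) = (1 + γ^2) * (1 + γ^2)^(m') := by ring
      rw [this]
      simp only [Nat.add_sub_cancel]
      push_cast
      linear_combination (-((m':ℝ)+1)/2) * (1+γ^2)^m' * hkey
  rw [hnum, zero_div]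
end

section
/- Let V be a finite-dimensional complex inner product space, H : V → V a linear map, and (vᵢ)_{i ∈ ι} a finite family of vectors whose span is all of V (the family may be linearly dependent). Define the generalized Hamiltonian matrix H̃ by H̃ᵢⱼ = ⟨vᵢ, H vⱼ⟩ and the overlap (Gram) matrix S̃ by S̃ᵢⱼ = ⟨vᵢ, vⱼ⟩. Then a complex number λ is an eigenvalue of H if and only if there exists c : ι → ℂ with S̃.mulVec c ≠ 0 and H̃.mulVec c = λ • (S̃.mulVec c). -/
open scoped InnerProductSpace

/-- Let `V` be a finite-dimensional complex inner product space, `H` a linear map on `V`,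
and `(vᵢ)` a finite (possibly linearly dependent) spanning family. With the generalized
Hamiltonian `H̃ᵢⱼ = ⟨vᵢ, H vⱼ⟩` and the overlap (Gram) matrix `S̃ᵢⱼ = ⟨vᵢ, vⱼ⟩`,
a complex number `λ` is an eigenvalue of `H` iff there is `c : ι → ℂ` with
`S̃ c ≠ 0` and `H̃ c = λ S̃ c`. -/
theorem stmt11 {V : Type*} [NormedAddCommGroup V] [InnerProductSpace ℂ V]
    [FiniteDimensional ℂ V] {ι : Type*} [Fintype ι]
    (H : V →ₗ[ℂ] V) (v : ι → V) (hspan : Submodule.span ℂ (Set.range v) = ⊤)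
    (Ht St : Matrix ι ι ℂ)
    (hHt : ∀ i j, Ht i j = ⟪v i, H (v j)⟫_ℂ)
    (hSt : ∀ i j, St i j = ⟪v i, v j⟫_ℂ)
    (lam : ℂ) :
    Module.End.HasEigenvalue H lam ↔
      ∃ c : ι → ℂ, St.mulVec c ≠ 0 ∧ Ht.mulVec c = lam • St.mulVec c := by
  classical
  have keyS : ∀ (c : ι → ℂ) (i : ι), St.mulVec c i = ⟪v i, ∑ j, c j • v j⟫_ℂ := by
    intro c i
    simp [Matrix.mulVec, dotProduct, hSt, inner_sum, inner_smul_right, mul_comm]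
  have keyH : ∀ (c : ι → ℂ) (i : ι), Ht.mulVec c i = ⟪v i, H (∑ j, c j • v j)⟫_ℂ := by
    intro c i
    simp [Matrix.mulVec, dotProduct, hHt, map_sum, map_smul, inner_sum,
      inner_smul_right, mul_comm]
  have hzero : ∀ x : V, (∀ i, ⟪v i, x⟫_ℂ = 0) → x = 0 := by
    intro x hx
    have hmem : x ∈ (Submodule.span ℂ (Set.range v))ᗮ := by
      rw [Submodule.mem_orthogonal]
      intro u hu
      induction hu using Submodule.span_induction with
      | mem u hu => obtain ⟨i, rfl⟩ := hu; exact hx i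
      | zero => simp
      | add u w _ _ hu hw => simp [inner_add_left, hu, hw]
      | smul a u _ hu => simp [inner_smul_left, hu]
    rw [hspan, Submodule.top_orthogonal_eq_bot] at hmem
    simpa using hmem
  constructor
  · intro hev
    obtain ⟨x, hx, hx0⟩ := hev.exists_hasEigenvector
    have hxmem : x ∈ Submodule.span ℂ (Set.range v) := hspan ▸ Submodule.mem_top
    obtain ⟨c, hc⟩ := Submodule.mem_span_range_iff_exists_fun ℂ |>.mp hxmem
    have hHx : H x = lam • x := Module.End.mem_eigenspace_iff.mp hx
    refine ⟨c, ?_, ?_⟩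
    · intro h0
      apply hx0
      apply hzero
      intro i
      have := congrFun h0 i
      rw [keyS, hc] at this
      simpa using this
    · funext i
      simp only [Pi.smul_apply, keyS, keyH, hc, hHx, inner_smul_right, smul_eq_mul]
  · rintro ⟨c, hc0, hc⟩
    set x := ∑ j, c j • v j with hx
    have hxne : x ≠ 0 := by
      intro h
      apply hc0
      funext i
      rw [keyS, ← hx, h, inner_zero_right]
      rfl
    have hHx : H x = lam • x := by
      have : ∀ i, ⟪v i, H x - lam • x⟫_ℂ = 0 := by
        intro i
        have h1 := congrFun hc i
        simp only [keyH, Pi.smul_apply, keyS, ← hx, smul_eq_mul] at h1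
        rw [inner_sub_right, inner_smul_right, h1]
        ring
      exact sub_eq_zero.mp (hzero _ this)
    exact Module.End.hasEigenvalue_of_hasEigenvector ⟨Module.End.mem_eigenspace_iff.mpr hHx, hxne⟩
end

section
/- Let A be an n×n Hermitian complex matrix with eigenvalues listed in increasing order μ₀ ≤ μ₁ ≤ …, let (u_j)_{j < d} with 2 ≤ d ≤ n be an orthonormal family of vectors, and let B be the d×d compression of A with entries B_{jk} = ⟨u_j, A u_k⟩, with eigenvalues listed in increasing order ν₀ ≤ ν₁ ≤ …. If there exists a nonzero eigenvector of A with eigenvalue μ₀ that lies in the span of (u_j)_{j < d}, then the spectral gaps satisfy μ₁ - μ₀ ≤ ν₁ - ν₀; i.e., restricting a Hermitian matrix to a subspace containing its ground state cannot decrease the spectral gap. -/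
open scoped InnerProductSpace

section Aux

variable {m : ℕ} {M : Matrix (Fin m) (Fin m) ℂ} (hM : M.IsHermitian)

private lemma herm_apply' (j : Fin m) :
    Matrix.toEuclideanLin M (hM.eigenvectorBasis j)
      = (hM.eigenvalues j : ℂ) • hM.eigenvectorBasis j := by
  apply (WithLp.equiv 2 (Fin m → ℂ)).injective
  simpa [Matrix.toEuclideanLin_apply] using hM.mulVec_eigenvectorBasis j

private lemma herm_repr' (x : EuclideanSpace ℂ (Fin m)) (i : Fin m) :
    (hM.eigenvectorBasis.repr (Matrix.toEuclideanLin M x)) i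
      = (hM.eigenvalues i : ℂ) * hM.eigenvectorBasis.repr x i := by
  rw [OrthonormalBasis.repr_apply_apply, OrthonormalBasis.repr_apply_apply,
    ← (Matrix.isHermitian_iff_isSymmetric.mp hM) (hM.eigenvectorBasis i) x,
    herm_apply' hM, inner_smul_left, Complex.conj_ofReal]

private lemma herm_inner_self' (x : EuclideanSpace ℂ (Fin m)) :
    ⟪x, Matrix.toEuclideanLin M x⟫_ℂ
      = ∑ i, ((hM.eigenvalues i : ℂ) * (‖hM.eigenvectorBasis.repr x i‖ ^ 2 : ℝ)) := by
  rw [← hM.eigenvectorBasis.repr.inner_map_map x (Matrix.toEuclideanLin M x)]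
  rw [PiLp.inner_apply]
  congr 1; ext i
  rw [herm_repr' hM, RCLike.inner_apply, mul_assoc,
    RCLike.mul_conj]
  norm_num

private lemma herm_re_inner_self' (x : EuclideanSpace ℂ (Fin m)) :
    (⟪x, Matrix.toEuclideanLin M x⟫_ℂ).re
      = ∑ i, hM.eigenvalues i * ‖hM.eigenvectorBasis.repr x i‖ ^ 2 := by
  rw [herm_inner_self' hM, Complex.re_sum]
  congr 1; ext i
  rw [← Complex.ofReal_mul, Complex.ofReal_re]

private lemma norm_sq_repr' (b : OrthonormalBasis (Fin m) ℂ (EuclideanSpace ℂ (Fin m)))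
    (x : EuclideanSpace ℂ (Fin m)) :
    ‖x‖ ^ 2 = ∑ i, ‖b.repr x i‖ ^ 2 := by
  rw [← b.repr.norm_map x, EuclideanSpace.norm_eq, Real.sq_sqrt]
  positivity

private lemma inner_repr' (b : OrthonormalBasis (Fin m) ℂ (EuclideanSpace ℂ (Fin m)))
    (x y : EuclideanSpace ℂ (Fin m)) :
    ⟪x, y⟫_ℂ = ∑ i, starRingEnd ℂ (b.repr x i) * b.repr y i := by
  rw [← b.repr.inner_map_map x y, PiLp.inner_apply]
  exact Finset.sum_congr rfl fun i _ => by rw [RCLike.inner_apply, mul_comm]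

private lemma herm_re_lower' (c : ℝ) (hc : ∀ i, c ≤ hM.eigenvalues i)
    (x : EuclideanSpace ℂ (Fin m)) :
    c * ‖x‖ ^ 2 ≤ (⟪x, Matrix.toEuclideanLin M x⟫_ℂ).re := by
  rw [herm_re_inner_self' hM, norm_sq_repr' hM.eigenvectorBasis, Finset.mul_sum]
  exact Finset.sum_le_sum fun i _ =>
    mul_le_mul_of_nonneg_right (hc i) (by positivity)

private lemma second_eig_bound (hm : 2 ≤ m) (μ : Fin m → ℝ)
    (hμ : μ = hM.eigenvalues ∘ Tuple.sort hM.eigenvalues)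
    (ψ x : EuclideanSpace ℂ (Fin m)) (hψ : ψ ≠ 0)
    (hgr : Matrix.toEuclideanLin M ψ = ((μ ⟨0, by omega⟩ : ℝ) : ℂ) • ψ)
    (hx : ⟪ψ, x⟫_ℂ = 0) :
    μ ⟨1, by omega⟩ * ‖x‖ ^ 2 ≤ (⟪x, Matrix.toEuclideanLin M x⟫_ℂ).re := by
  set σ := Tuple.sort hM.eigenvalues with hσ
  have hmono : Monotone μ := by rw [hμ]; exact Tuple.monotone_sort hM.eigenvalues
  set b := hM.eigenvectorBasis with hb
  have hμval : ∀ i, μ i = hM.eigenvalues (σ i) := fun i => by rw [hμ]; rfl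
  have hre : (⟪x, Matrix.toEuclideanLin M x⟫_ℂ).re
      = ∑ i, μ i * ‖b.repr x (σ i)‖ ^ 2 := by
    rw [herm_re_inner_self' hM, ← Equiv.sum_comp σ]
    exact Finset.sum_congr rfl fun i _ => by rw [hμval]
  have hnx : ‖x‖ ^ 2 = ∑ i, ‖b.repr x (σ i)‖ ^ 2 := by
    rw [norm_sq_repr' b, ← Equiv.sum_comp σ]
  have hker : ∀ j, hM.eigenvalues j ≠ μ ⟨0, by omega⟩ → b.repr ψ j = 0 := by
    intro j hj
    have h1 := herm_repr' hM ψ j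
    rw [hgr, map_smul] at h1
    have : ((hM.eigenvalues j : ℂ) - (μ ⟨0, by omega⟩ : ℝ)) * b.repr ψ j = 0 := by
      rw [sub_mul]
      simp only [PiLp.smul_apply, smul_eq_mul] at h1
      rw [← h1]; ring
    rcases mul_eq_zero.mp this with h | h
    · exact absurd (by exact_mod_cast sub_eq_zero.mp h) hj
    · exact h
  rw [hre, hnx, Finset.mul_sum, ← sub_nonneg, ← Finset.sum_sub_distrib]
  have key : ∀ i : Fin m, i ≠ ⟨0, by omega⟩ → μ ⟨1, by omega⟩ ≤ μ i := by
    intro i hi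
    apply hmono
    simp only [Fin.le_def, Fin.val_mk]
    simp only [Fin.ne_iff_vne, Fin.val_mk] at hi
    omega
  apply Finset.sum_nonneg
  intro i _
  rw [← sub_mul]
  by_cases hi : i = ⟨0, by omega⟩
  · subst hi
    by_cases hμ01 : μ ⟨0, by omega⟩ = μ ⟨1, by omega⟩
    · rw [← hμ01, sub_self, zero_mul]
    · have hlt : μ ⟨0, by omega⟩ < μ ⟨1, by omega⟩ :=
        lt_of_le_of_ne (hmono (Fin.mk_le_mk.mpr (by omega))) hμ01
      have hψ0 : ∀ i : Fin m, i ≠ ⟨0, by omega⟩ → b.repr ψ (σ i) = 0 := by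
        intro i hi
        apply hker
        rw [← hμval]
        intro h
        have : μ i = μ ⟨0, by omega⟩ := h
        linarith [key i hi]
      have hd0 : b.repr ψ (σ ⟨0, by omega⟩) ≠ 0 := by
        intro h0
        apply hψ
        have : b.repr ψ = 0 := by
          ext j
          rcases eq_or_ne (σ.symm j) ⟨0, by omega⟩ with h | h
          · have : j = σ ⟨0, by omega⟩ := by
              rw [← h]; simp
            rw [this]; exact h0
          · have := hψ0 _ h
            rwa [Equiv.apply_symm_apply] at this
        simpa using b.repr.map_eq_zero_iff.mp (by exact_mod_cast this)
      have hinner : ⟪ψ, x⟫_ℂ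
          = starRingEnd ℂ (b.repr ψ (σ ⟨0, by omega⟩)) * b.repr x (σ ⟨0, by omega⟩) := by
        rw [inner_repr' b, ← Equiv.sum_comp σ]
        rw [Finset.sum_eq_single (⟨0, by omega⟩ : Fin m)]
        · intro i _ hi
          rw [hψ0 i hi]; simp
        · simp
      rw [hinner] at hx
      rcases mul_eq_zero.mp hx with h | h
      · exact absurd (by simpa using h) hd0
      · rw [h]; simp
  · have := key i hi
    have h2 : (0:ℝ) ≤ ‖b.repr x (σ i)‖ ^ 2 := by positivity
    nlinarith

private lemma toEuclideanLin_comp' {p : ℕ} (M : Matrix (Fin p) (Fin p) ℂ)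
    (v : EuclideanSpace ℂ (Fin p)) (j : Fin p) :
    Matrix.toEuclideanLin M v j = ∑ k, M j k * v k := rfl

end Aux

set_option maxHeartbeats 1000000 in
/-- Let `A` be an `N×N` Hermitian matrix with eigenvalues `μ₀ ≤ μ₁ ≤ …` (sorted), let
`(u_j)_{j<d}` (`2 ≤ d ≤ N`) be an orthonormal family, and let `B` be the `d×d`
compression of `A` with entries `B_{jk} = ⟨u_j, A u_k⟩` and sorted eigenvalues
`ν₀ ≤ ν₁ ≤ …`. If some nonzero eigenvector of `A` with eigenvalue `μ₀` lies in the
span of the `u_j`, then `μ₁ - μ₀ ≤ ν₁ - ν₀`: restricting a Hermitian matrix to a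
subspace containing its ground state cannot decrease the spectral gap. -/
theorem stmt17 (N d : ℕ) (hd : 2 ≤ d) (hdN : d ≤ N)
    (A : Matrix (Fin N) (Fin N) ℂ) (hA : A.IsHermitian)
    (u : Fin d → EuclideanSpace ℂ (Fin N)) (hu : Orthonormal ℂ u)
    (B : Matrix (Fin d) (Fin d) ℂ)
    (hB : ∀ j k, B j k = ⟪u j, Matrix.toEuclideanLin A (u k)⟫_ℂ)
    (hBH : B.IsHermitian)
    (μ : Fin N → ℝ) (hμ : μ = hA.eigenvalues ∘ Tuple.sort hA.eigenvalues)
    (ν : Fin d → ℝ) (hν : ν = hBH.eigenvalues ∘ Tuple.sort hBH.eigenvalues)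
    (hground : ∃ ψ : EuclideanSpace ℂ (Fin N), ψ ≠ 0 ∧
      Matrix.toEuclideanLin A ψ = (μ ⟨0, by omega⟩ : ℂ) • ψ ∧
      ψ ∈ Submodule.span ℂ (Set.range u)) :
    μ ⟨1, by omega⟩ - μ ⟨0, by omega⟩ ≤ ν ⟨1, by omega⟩ - ν ⟨0, by omega⟩ := by
  obtain ⟨ψ, hψ0, hψeig, hψspan⟩ := hground
  set Uv : EuclideanSpace ℂ (Fin d) → EuclideanSpace ℂ (Fin N) :=
    fun y => ∑ j, y j • u j with hUv
  have F1 : ∀ y z : EuclideanSpace ℂ (Fin d),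
      ⟪Uv y, Matrix.toEuclideanLin A (Uv z)⟫_ℂ = ⟪y, Matrix.toEuclideanLin B z⟫_ℂ := by
    intro y z
    rw [hUv]
    simp only []
    rw [map_sum]
    simp only [map_smul, sum_inner, inner_sum, inner_smul_left, inner_smul_right, ← hB]
    rw [PiLp.inner_apply]
    simp only [toEuclideanLin_comp', RCLike.inner_apply]
    simp_rw [Finset.mul_sum]
    rw [Finset.sum_comm]
    congr 1; ext j
    rw [Finset.sum_mul]
    congr 1; ext k
    ring
  have F2 : ∀ y z : EuclideanSpace ℂ (Fin d), ⟪Uv y, Uv z⟫_ℂ = ⟪y, z⟫_ℂ := by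
    intro y z
    rw [hUv]
    simp only [sum_inner, inner_smul_left, hu.inner_right_fintype, PiLp.inner_apply,
      RCLike.inner_apply]
    exact Finset.sum_congr rfl fun _ _ => mul_comm _ _
  have Fnorm : ∀ y : EuclideanSpace ℂ (Fin d), ‖Uv y‖ ^ 2 = ‖y‖ ^ 2 := by
    intro y
    have h1 := inner_self_eq_norm_sq (𝕜 := ℂ) (Uv y)
    have h2 := inner_self_eq_norm_sq (𝕜 := ℂ) y
    rw [← h1, ← h2, F2]
  -- the compressed ground state
  obtain ⟨c, hc⟩ := (Submodule.mem_span_range_iff_exists_fun ℂ).mp hψspan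
  set φ : EuclideanSpace ℂ (Fin d) := WithLp.toLp 2 c with hφdef
  have hφψ : Uv φ = ψ := hc
  have hcomp : ∀ j, ⟪u j, ψ⟫_ℂ = φ j := fun j => by
    rw [← hc]; exact hu.inner_right_fintype c j
  have hφ0 : φ ≠ 0 := by
    intro h
    apply hψ0
    rw [← hφψ, h]
    simp [hUv]
  have hφeig : Matrix.toEuclideanLin B φ = ((μ ⟨0, by omega⟩ : ℝ) : ℂ) • φ := by
    ext j
    rw [toEuclideanLin_comp']
    have : ∑ k, B j k * φ k = ⟪u j, Matrix.toEuclideanLin A ψ⟫_ℂ := by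
      rw [← hφψ, hUv]
      simp only []
      rw [map_sum]
      simp only [map_smul, inner_sum, inner_smul_right, ← hB]
      exact Finset.sum_congr rfl fun k _ => by ring
    rw [this, hψeig, inner_smul_right, hcomp j]
    simp
  -- notation for sorted eigen-data
  set τ := Tuple.sort hBH.eigenvalues with hτ
  have hνmono : Monotone ν := by rw [hν]; exact Tuple.monotone_sort hBH.eigenvalues
  have hμmono : Monotone μ := by rw [hμ]; exact Tuple.monotone_sort hA.eigenvalues
  have hνval : ∀ i, ν i = hBH.eigenvalues (τ i) := fun i => by rw [hν]; rfl
  have hμ0min : ∀ i, μ ⟨0, by omega⟩ ≤ hA.eigenvalues i := by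
    intro i
    have h1 : μ ⟨0, by omega⟩ ≤ μ ((Tuple.sort hA.eigenvalues).symm i) :=
      hμmono (by simp [Fin.le_def])
    have h2 : μ ((Tuple.sort hA.eigenvalues).symm i) = hA.eigenvalues i := by
      rw [hμ]
      simp [Function.comp]
    linarith
  have hν0min : ∀ i, ν ⟨0, by omega⟩ ≤ hBH.eigenvalues i := by
    intro i
    have h1 : ν ⟨0, by omega⟩ ≤ ν (τ.symm i) := hνmono (by simp [Fin.le_def])
    have h2 : ν (τ.symm i) = hBH.eigenvalues i := by
      rw [hν, hτ]
      simp [Function.comp]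
    linarith
  -- Step 2 : ν₀ ≤ μ₀
  have step2 : ν ⟨0, by omega⟩ ≤ μ ⟨0, by omega⟩ := by
    have hrepr0 : hBH.eigenvectorBasis.repr φ ≠ 0 := by
      intro h
      exact hφ0 (by simpa using hBH.eigenvectorBasis.repr.map_eq_zero_iff.mp (by exact_mod_cast h))
    have hex : ∃ j, hBH.eigenvectorBasis.repr φ j ≠ 0 := by
      by_contra h
      push_neg at h
      exact hrepr0 (by ext j; simpa using h j)
    obtain ⟨j, hj⟩ := hex
    have heig : hBH.eigenvalues j = μ ⟨0, by omega⟩ := by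
      have h1 := (herm_repr' hBH φ j).symm
      rw [hφeig, map_smul] at h1
      simp only [PiLp.smul_apply, smul_eq_mul] at h1
      have h2 := mul_right_cancel₀ hj h1
      exact Complex.ofReal_injective h2
    calc ν ⟨0, by omega⟩ ≤ hBH.eigenvalues j := hν0min j
      _ = μ ⟨0, by omega⟩ := heig
  -- Step 1 : μ₀ ≤ ν₀
  have step1 : μ ⟨0, by omega⟩ ≤ ν ⟨0, by omega⟩ := by
    set w := hBH.eigenvectorBasis (τ ⟨0, by omega⟩) with hw
    have hw1 : ‖w‖ = 1 := hBH.eigenvectorBasis.orthonormal.1 _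
    have hww : ⟪w, w⟫_ℂ = 1 := by
      rw [hw]
      exact ((orthonormal_iff_ite.mp hBH.eigenvectorBasis.orthonormal) _ _).trans (if_pos rfl)
    have h1 : (⟪w, Matrix.toEuclideanLin B w⟫_ℂ).re = ν ⟨0, by omega⟩ := by
      conv_lhs => rw [hw, herm_apply' hBH, inner_smul_right, ← hw, hww, mul_one, ← hνval]
      simp
    have h2 := herm_re_lower' hA (μ ⟨0, by omega⟩) hμ0min (Uv w)
    rw [F1, h1, Fnorm, hw1] at h2
    simpa using h2
  -- Step 3 : μ₁ ≤ ν₁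
  have step3 : μ ⟨1, by omega⟩ ≤ ν ⟨1, by omega⟩ := by
    set w0 := hBH.eigenvectorBasis (τ ⟨0, by omega⟩) with hw0
    set w1 := hBH.eigenvectorBasis (τ ⟨1, by omega⟩) with hw1
    have hτne : τ ⟨0, by omega⟩ ≠ τ ⟨1, by omega⟩ := by
      intro h
      have := τ.injective h
      simp [Fin.ext_iff] at this
    have hON := orthonormal_iff_ite.mp hBH.eigenvectorBasis.orthonormal
    have h00 : ⟪w0, w0⟫_ℂ = 1 := by rw [hw0]; exact (hON _ _).trans (if_pos rfl)
    have h11 : ⟪w1, w1⟫_ℂ = 1 := by rw [hw1]; exact (hON _ _).trans (if_pos rfl)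
    have h01 : ⟪w0, w1⟫_ℂ = 0 := by
      rw [hw0, hw1]; exact (hON _ _).trans (if_neg hτne)
    have h10 : ⟪w1, w0⟫_ℂ = 0 := by
      rw [hw0, hw1]; exact (hON _ _).trans (if_neg (Ne.symm hτne))
    have hν01 : ν ⟨0, by omega⟩ ≤ ν ⟨1, by omega⟩ := hνmono (Fin.mk_le_mk.mpr (by omega))
    have hTw0 : Matrix.toEuclideanLin B w0 = ((ν ⟨0, by omega⟩ : ℝ) : ℂ) • w0 := by
      rw [hw0, herm_apply' hBH, hνval]
    have hTw1 : Matrix.toEuclideanLin B w1 = ((ν ⟨1, by omega⟩ : ℝ) : ℂ) • w1 := by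
      rw [hw1, herm_apply' hBH, hνval]
    obtain ⟨y, hy0, hyφ, hyB⟩ : ∃ y : EuclideanSpace ℂ (Fin d), y ≠ 0 ∧ ⟪φ, y⟫_ℂ = 0 ∧
        (⟪y, Matrix.toEuclideanLin B y⟫_ℂ).re ≤ ν ⟨1, by omega⟩ * ‖y‖ ^ 2 := by
      by_cases h0 : ⟪φ, w0⟫_ℂ = 0
      · refine ⟨w0, ?_, h0, ?_⟩
        · intro h
          rw [h] at h00
          simp at h00
        · rw [hTw0, inner_smul_right, h00, mul_one]
          have hn : ‖w0‖ = 1 := by rw [hw0]; exact hBH.eigenvectorBasis.orthonormal.1 _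
          rw [hn]
          simpa using hν01
      · set a := ⟪φ, w1⟫_ℂ with ha
        set b := ⟪φ, w0⟫_ℂ with hb'
        refine ⟨a • w0 - b • w1, ?_, ?_, ?_⟩
        · intro h
          apply h0
          have h2 := congrArg (fun v => ⟪w1, v⟫_ℂ) h
          simp only [inner_sub_right, inner_smul_right, h10, h11, inner_zero_right,
            mul_zero, mul_one, zero_sub, neg_eq_zero] at h2
          exact h2
        · rw [inner_sub_right, inner_smul_right, inner_smul_right, ← ha, ← hb']
          ring
        · have hTy : Matrix.toEuclideanLin B (a • w0 - b • w1)
              = a • (((ν ⟨0, by omega⟩ : ℝ) : ℂ) • w0)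
                - b • (((ν ⟨1, by omega⟩ : ℝ) : ℂ) • w1) := by
            rw [map_sub, map_smul, map_smul, hTw0, hTw1]
          have hinner : ⟪a • w0 - b • w1, Matrix.toEuclideanLin B (a • w0 - b • w1)⟫_ℂ
              = (((ν ⟨0, by omega⟩ * ‖a‖ ^ 2 + ν ⟨1, by omega⟩ * ‖b‖ ^ 2 : ℝ)) : ℂ) := by
            rw [hTy]
            have e1 : ⟪a • w0 - b • w1,
                a • (((ν ⟨0, by omega⟩ : ℝ) : ℂ) • w0)
                  - b • (((ν ⟨1, by omega⟩ : ℝ) : ℂ) • w1)⟫_ℂ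
                = ((ν ⟨0, by omega⟩ : ℝ) : ℂ) * (starRingEnd ℂ a * a)
                  + ((ν ⟨1, by omega⟩ : ℝ) : ℂ) * (starRingEnd ℂ b * b) := by
              simp only [inner_sub_left, inner_sub_right, inner_smul_left, inner_smul_right,
                h00, h01, h10, h11, Complex.conj_ofReal]
              ring
            rw [e1, Complex.conj_mul', Complex.conj_mul']
            push_cast
            ring
          have hyy : ‖a • w0 - b • w1‖ ^ 2 = ‖a‖ ^ 2 + ‖b‖ ^ 2 := by
            have e2 : ⟪a • w0 - b • w1, a • w0 - b • w1⟫_ℂ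
                = ((‖a‖ ^ 2 + ‖b‖ ^ 2 : ℝ) : ℂ) := by
              have e3 : ⟪a • w0 - b • w1, a • w0 - b • w1⟫_ℂ
                  = starRingEnd ℂ a * a + starRingEnd ℂ b * b := by
                simp only [inner_sub_left, inner_sub_right, inner_smul_left, inner_smul_right,
                  h00, h01, h10, h11]
                ring
              rw [e3, Complex.conj_mul', Complex.conj_mul']
              push_cast
              ring
            rw [← inner_self_eq_norm_sq (𝕜 := ℂ), e2]
            simp [← Complex.ofReal_pow]
          rw [hinner, hyy, Complex.ofReal_re]
          have hb2 : (0:ℝ) ≤ ‖a‖ ^ 2 := by positivity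
          nlinarith
    -- apply the second-eigenvalue bound
    have hxψ : ⟪ψ, Uv y⟫_ℂ = 0 := by rw [← hφψ, F2, hyφ]
    have hL5 := second_eig_bound hA (by omega) μ hμ ψ (Uv y) hψ0 hψeig hxψ
    have hF1 := F1 y y
    have hrey : (⟪Uv y, Matrix.toEuclideanLin A (Uv y)⟫_ℂ).re
        = (⟪y, Matrix.toEuclideanLin B y⟫_ℂ).re := by rw [hF1]
    rw [hrey, Fnorm] at hL5
    have hypos : (0:ℝ) < ‖y‖ ^ 2 := by
      have : ‖y‖ ≠ 0 := fun h => hy0 (norm_eq_zero.mp h)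
      positivity
    have := le_trans hL5 hyB
    exact le_of_mul_le_mul_right (by linarith) hypos
  linarith
end
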